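/- arXiv:1712.01226 — 2 statements merged into one kernel-verified Lean document; each statement's English description precedes it below -/
import Mathlib

section
/- For every r ≥ 0, the following moment identities of the kernel hold: ∫₀^∞ K(R,r) dR = 1, ∫₀^∞ R²·K(R,r) dR = r² + 2, ∫₀^∞ R⁴·K(R,r) dR = r⁴ + 8r² + 8, and ∫₀^∞ R⁶·K(R,r) dR = r⁶ + 18r⁴ + 72r² + 48. -/
open MeasureTheory Real Set

/-- Modified Bessel function of the first kind of order zero. -/
noncomputable def I0 (x : ℝ) : ℝ :=
  (1 / π) * ∫ θ in (0:ℝ)..π, Real.exp (x * Real.cos θ)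

/-- The kernel `K(R,r) = R e^{-(R²+r²)/2} I₀(rR)`. -/
noncomputable def Ker (R r : ℝ) : ℝ :=
  R * Real.exp (-(R ^ 2 + r ^ 2) / 2) * I0 (r * R)

/-- Output density induced by an input (amplitude) distribution `μ`. -/
noncomputable def fout (μ : Measure ℝ) (R : ℝ) : ℝ := ∫ r, Ker R r ∂μ

/-- Output entropy `H(μ) = -∫₀^∞ f_μ(R) ln (f_μ(R)/R) dR`. -/
noncomputable def Hout (μ : Measure ℝ) : ℝ :=
  -∫ R in Ioi (0:ℝ), fout μ R * Real.log (fout μ R / R)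

/-!
In polar coordinates the angular integral of `exp (r R cos θ)` is `2π I₀(rR)`, so
`2π ∫₀^∞ R^(2k) K(R,r) dR` is the integral over the plane of `(x² + y²)^k` against the Gaussian
`exp (-((x - r)² + y²) / 2)`. Expanding `(x² + y²)^k` binomially and using Fubini reduces this to
one-dimensional Gaussian moments: `∫ u^n exp (-u²/2) du` is `(n - 1)‼ √(2π)` for even `n` and `0`
for odd `n`, and the shift by `r` is absorbed by expanding `(u + r)^n`.
-/

open scoped Nat

-- At `n = 0` the truncated `n - 1 = 0` gives `0‼ = 1`, the right value.
noncomputable def stdGaussianMoment (n : ℕ) : ℝ :=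
  if Even n then ((n - 1)‼ : ℝ) else 0

lemma integrable_pow_mul_exp_neg_sq_div_two (n : ℕ) :
    Integrable fun x : ℝ => x ^ n * exp (-x ^ 2 / 2) := by
  have h := integrable_rpow_mul_exp_neg_mul_sq (b := 1 / 2) (by norm_num)
    (s := n) (by linarith [n.cast_nonneg (α := ℝ)])
  simp only [rpow_natCast] at h
  convert h using 4 with x
  ring

lemma integral_pow_mul_exp_neg_sq_div_two_of_odd {n : ℕ} (hn : Odd n) :
    ∫ x : ℝ, x ^ n * exp (-x ^ 2 / 2) = 0 := by
  have h := integral_neg_eq_self (fun x : ℝ => x ^ n * exp (-x ^ 2 / 2)) volume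
  simp only [hn.neg_pow, neg_sq, neg_mul, integral_neg] at h
  linarith

lemma integral_pow_mul_exp_neg_sq_div_two_of_even {n : ℕ} (hn : Even n) :
    ∫ x : ℝ, x ^ n * exp (-x ^ 2 / 2) = (n - 1)‼ * √(2 * π) := by
  obtain ⟨m, rfl⟩ := hn
  have hIoi := integral_rpow_mul_exp_neg_mul_rpow (p := 2) (q := (m + m : ℕ)) (b := 1 / 2)
    (by norm_num) (by linarith [(m + m).cast_nonneg (α := ℝ)]) (by norm_num)
  have hsymm : ∫ x : ℝ, x ^ (m + m) * exp (-x ^ 2 / 2)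
      = 2 * ∫ x in Ioi (0:ℝ), x ^ (m + m) * exp (-x ^ 2 / 2) := by
    rw [← integral_comp_abs (f := fun x => x ^ (m + m) * exp (-x ^ 2 / 2))]
    simp only [← two_mul, pow_mul, sq_abs]
  have hpow : (1 / 2 : ℝ) ^ (-((m + m : ℕ) + 1 : ℝ) / 2) = 2 ^ m * √2 := by
    rw [one_div, inv_rpow zero_le_two, ← rpow_neg zero_le_two, sqrt_eq_rpow, ← rpow_natCast,
      ← rpow_add two_pos]
    push_cast
    ring_nf
  have hGamma : Gamma ((((m + m : ℕ) : ℝ) + 1) / 2) = (m + m - 1)‼ * √π / 2 ^ m := by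
    rw [← two_mul, ← Gamma_nat_add_half]
    push_cast
    ring_nf
  have hrpow : ∀ x : ℝ, x ^ ((m + m : ℕ) : ℝ) * exp (-(1 / 2) * x ^ (2 : ℝ))
      = x ^ (m + m) * exp (-x ^ 2 / 2) := fun x => by
    rw [rpow_natCast, rpow_two]; ring_nf
  simp only [hrpow, hpow, hGamma] at hIoi
  rw [hsymm, hIoi, sqrt_mul zero_le_two]
  field_simp

lemma integral_pow_mul_exp_neg_sq_div_two (n : ℕ) :
    ∫ x : ℝ, x ^ n * exp (-x ^ 2 / 2) = √(2 * π) * stdGaussianMoment n := by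
  rcases n.even_or_odd with hn | hn
  · rw [integral_pow_mul_exp_neg_sq_div_two_of_even hn, stdGaussianMoment, if_pos hn, mul_comm]
  · rw [integral_pow_mul_exp_neg_sq_div_two_of_odd hn, stdGaussianMoment,
      if_neg (Nat.not_even_iff_odd.mpr hn), mul_zero]

noncomputable def gaussianMoment (c : ℝ) (n : ℕ) : ℝ :=
  ∑ k ∈ Finset.range (n + 1), n.choose k * c ^ (n - k) * stdGaussianMoment k

lemma add_pow_mul_exp_neg_sq_div_two (n : ℕ) (u c : ℝ) :
    (u + c) ^ n * exp (-u ^ 2 / 2)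
      = ∑ k ∈ Finset.range (n + 1), n.choose k * c ^ (n - k) * (u ^ k * exp (-u ^ 2 / 2)) := by
  rw [add_pow, Finset.sum_mul]
  exact Finset.sum_congr rfl fun k _ => by ring

lemma integrable_pow_mul_exp_neg_sub_sq_div_two (n : ℕ) (c : ℝ) :
    Integrable fun x : ℝ => x ^ n * exp (-(x - c) ^ 2 / 2) := by
  have h : Integrable fun u : ℝ => (u + c) ^ n * exp (-u ^ 2 / 2) := by
    simp only [add_pow_mul_exp_neg_sq_div_two]
    exact integrable_finsetSum _ fun k _ => (integrable_pow_mul_exp_neg_sq_div_two k).const_mul _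
  simpa using h.comp_sub_right c

lemma integral_pow_mul_exp_neg_sub_sq_div_two (n : ℕ) (c : ℝ) :
    ∫ x : ℝ, x ^ n * exp (-(x - c) ^ 2 / 2) = √(2 * π) * gaussianMoment c n := by
  rw [← integral_add_right_eq_self _ c]
  simp only [add_sub_cancel_right, add_pow_mul_exp_neg_sq_div_two]
  rw [integral_finsetSum _ fun k _ => (integrable_pow_mul_exp_neg_sq_div_two k).const_mul _,
    gaussianMoment, Finset.mul_sum]
  refine Finset.sum_congr rfl fun k _ => ?_
  rw [integral_const_mul, integral_pow_mul_exp_neg_sq_div_two]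
  ring

lemma sq_add_sq_pow_mul_exp_eq_sum (k : ℕ) (r : ℝ) (p : ℝ × ℝ) :
    (p.1 ^ 2 + p.2 ^ 2) ^ k * exp (-((p.1 - r) ^ 2 + p.2 ^ 2) / 2)
      = ∑ j ∈ Finset.range (k + 1), k.choose j * ((p.1 ^ (2 * j) * exp (-(p.1 - r) ^ 2 / 2))
          * (p.2 ^ (2 * (k - j)) * exp (-p.2 ^ 2 / 2))) := by
  rw [add_pow, Finset.sum_mul]
  refine Finset.sum_congr rfl fun j _ => ?_
  rw [pow_mul, pow_mul, show -((p.1 - r) ^ 2 + p.2 ^ 2) / 2 = -(p.1 - r) ^ 2 / 2 + -p.2 ^ 2 / 2 by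
    ring, exp_add]
  ring

lemma integrable_pow_mul_exp_neg_sub_sq_div_two_prod (m n : ℕ) (r : ℝ) :
    Integrable fun p : ℝ × ℝ =>
      (p.1 ^ m * exp (-(p.1 - r) ^ 2 / 2)) * (p.2 ^ n * exp (-p.2 ^ 2 / 2)) := by
  rw [Measure.volume_eq_prod]
  exact (integrable_pow_mul_exp_neg_sub_sq_div_two m r).mul_prod
    (integrable_pow_mul_exp_neg_sq_div_two n)

lemma integrable_sq_add_sq_pow_mul_exp (k : ℕ) (r : ℝ) :
    Integrable fun p : ℝ × ℝ => (p.1 ^ 2 + p.2 ^ 2) ^ k * exp (-((p.1 - r) ^ 2 + p.2 ^ 2) / 2) := by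
  simp only [sq_add_sq_pow_mul_exp_eq_sum]
  exact integrable_finsetSum _ fun j _ =>
    (integrable_pow_mul_exp_neg_sub_sq_div_two_prod _ _ r).const_mul _

lemma integral_sq_add_sq_pow_mul_exp (k : ℕ) (r : ℝ) :
    ∫ p : ℝ × ℝ, (p.1 ^ 2 + p.2 ^ 2) ^ k * exp (-((p.1 - r) ^ 2 + p.2 ^ 2) / 2)
      = 2 * π * ∑ j ∈ Finset.range (k + 1),
          k.choose j * gaussianMoment r (2 * j) * stdGaussianMoment (2 * (k - j)) := by
  simp only [sq_add_sq_pow_mul_exp_eq_sum]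
  rw [integral_finsetSum _ fun j _ =>
    (integrable_pow_mul_exp_neg_sub_sq_div_two_prod _ _ r).const_mul _, Finset.mul_sum]
  refine Finset.sum_congr rfl fun j _ => ?_
  rw [integral_const_mul, Measure.volume_eq_prod,
    integral_prod_mul (fun x => x ^ (2 * j) * exp (-(x - r) ^ 2 / 2))
      (fun y => y ^ (2 * (k - j)) * exp (-y ^ 2 / 2)),
    integral_pow_mul_exp_neg_sub_sq_div_two, integral_pow_mul_exp_neg_sq_div_two]
  have : √(2 * π) * √(2 * π) = 2 * π := mul_self_sqrt (by positivity)
  linear_combination (k.choose j * gaussianMoment r (2 * j) * stdGaussianMoment (2 * (k - j))) * this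

lemma integral_Ioo_exp_mul_cos (x : ℝ) :
    ∫ θ in Ioo (-π) π, exp (x * cos θ) = 2 * π * I0 x := by
  have hc : Continuous fun θ : ℝ => exp (x * cos θ) := by fun_prop
  have heven : ∫ θ in (-π)..0, exp (x * cos θ) = ∫ θ in (0:ℝ)..π, exp (x * cos θ) := by
    simpa using (intervalIntegral.integral_comp_neg (a := 0) (b := π)
      fun θ => exp (x * cos θ)).symm
  rw [← integral_Ioc_eq_integral_Ioo, ← intervalIntegral.integral_of_le (by linarith [pi_pos]),
    ← intervalIntegral.integral_add_adjacent_intervals (b := 0) (hc.intervalIntegrable _ _)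
      (hc.intervalIntegrable _ _), heven, I0]
  field_simp
  ring

lemma integrableOn_polarCoord_target {E : Type*} [NormedAddCommGroup E] [NormedSpace ℝ E]
    {f : ℝ × ℝ → E} (hf : Integrable f) :
    IntegrableOn (fun p => p.1 • f (polarCoord.symm p)) polarCoord.target := by
  have h := (integrableOn_image_iff_integrableOn_abs_det_fderiv_smul volume
    polarCoord.open_target.measurableSet
    (fun p _ => (hasFDerivAt_polarCoord_symm p).hasFDerivWithinAt) polarCoord.symm.injOn f).mp
  rw [polarCoord.symm_image_target_eq_source] at h
  refine (h hf.integrableOn).congr_fun (fun p hp => ?_) polarCoord.open_target.measurableSet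
  simp only [det_fderivPolarCoordSymm, abs_of_pos (show 0 < p.1 from hp.1)]

lemma two_pi_mul_integral_pow_mul_Ker (k : ℕ) (r : ℝ) :
    2 * π * ∫ R in Ioi (0:ℝ), R ^ (2 * k) * Ker R r
      = ∫ p : ℝ × ℝ, (p.1 ^ 2 + p.2 ^ 2) ^ k * exp (-((p.1 - r) ^ 2 + p.2 ^ 2) / 2) := by
  have hpolar : ∀ p : ℝ × ℝ,
      p.1 • (((p.1 * cos p.2) ^ 2 + (p.1 * sin p.2) ^ 2) ^ k
        * exp (-((p.1 * cos p.2 - r) ^ 2 + (p.1 * sin p.2) ^ 2) / 2))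
      = p.1 ^ (2 * k + 1) * exp (-(p.1 ^ 2 + r ^ 2) / 2) * exp (r * p.1 * cos p.2) := by
    intro p
    have h := sin_sq_add_cos_sq p.2
    rw [smul_eq_mul, show (p.1 * cos p.2) ^ 2 + (p.1 * sin p.2) ^ 2 = p.1 ^ 2 by
      linear_combination p.1 ^ 2 * h, show -((p.1 * cos p.2 - r) ^ 2 + (p.1 * sin p.2) ^ 2) / 2
        = -(p.1 ^ 2 + r ^ 2) / 2 + r * p.1 * cos p.2 by linear_combination (-p.1 ^ 2 / 2) * h,
      exp_add]
    ring
  have hint := integrableOn_polarCoord_target (integrable_sq_add_sq_pow_mul_exp k r)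
  simp only [polarCoord_symm_apply, hpolar, polarCoord_target] at hint
  rw [← integral_comp_polarCoord_symm]
  simp only [polarCoord_symm_apply, hpolar, polarCoord_target]
  rw [Measure.volume_eq_prod, setIntegral_prod _ hint, ← integral_const_mul]
  refine setIntegral_congr_fun measurableSet_Ioi fun R _ => ?_
  dsimp only
  rw [integral_const_mul, integral_Ioo_exp_mul_cos, Ker]
  ring

lemma integral_pow_mul_Ker (k : ℕ) (r : ℝ) :
    ∫ R in Ioi (0:ℝ), R ^ (2 * k) * Ker R r
      = ∑ j ∈ Finset.range (k + 1),
          k.choose j * gaussianMoment r (2 * j) * stdGaussianMoment (2 * (k - j)) := by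
  have h := two_pi_mul_integral_pow_mul_Ker k r
  rw [integral_sq_add_sq_pow_mul_exp] at h
  exact mul_left_cancel₀ (by positivity) h

theorem stmt_16_general (r : ℝ) :
    (∫ R in Ioi (0:ℝ), Ker R r) = 1 ∧
    (∫ R in Ioi (0:ℝ), R ^ 2 * Ker R r) = r ^ 2 + 2 ∧
    (∫ R in Ioi (0:ℝ), R ^ 4 * Ker R r) = r ^ 4 + 8 * r ^ 2 + 8 ∧
    (∫ R in Ioi (0:ℝ), R ^ 6 * Ker R r) = r ^ 6 + 18 * r ^ 4 + 72 * r ^ 2 + 48 := by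
  refine ⟨?_, (integral_pow_mul_Ker 1 r).trans ?_, (integral_pow_mul_Ker 2 r).trans ?_,
    (integral_pow_mul_Ker 3 r).trans ?_⟩
  · simpa [gaussianMoment, stdGaussianMoment] using integral_pow_mul_Ker 0 r
  all_goals
    simp [Finset.sum_range_succ, gaussianMoment, stdGaussianMoment, Nat.choose, Nat.even_iff,
      Nat.doubleFactorial]
    ring

theorem stmt_16 (r : ℝ) (hr : 0 ≤ r) :
    (∫ R in Ioi (0:ℝ), Ker R r) = 1 ∧
    (∫ R in Ioi (0:ℝ), R ^ 2 * Ker R r) = r ^ 2 + 2 ∧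
    (∫ R in Ioi (0:ℝ), R ^ 4 * Ker R r) = r ^ 4 + 8 * r ^ 2 + 8 ∧
    (∫ R in Ioi (0:ℝ), R ^ 6 * Ker R r) = r ^ 6 + 18 * r ^ 4 + 72 * r ^ 2 + 48 :=
  stmt_16_general r
end

section
/- For every integer n ≥ 0 and every choice of real coefficients α_0, …, α_n, there exist unique real coefficients c_0, …, c_n such that ∫₀^∞ K(R,r)·(Σ_{i=0}^n c_i·R^{2i}) dR = Σ_{i=0}^n α_i·r^{2i} for all r ≥ 0. -/
open MeasureTheory Real Set

/-!
Expanding `I₀(x) = ∑ₖ (x/2)^{2k} / (k!)²` and integrating termwise against the Gaussian moments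
`∫₀^∞ R^{2m+1} e^{-R²/2} dR = 2^m m!` gives
`∫₀^∞ K(R,r) R^{2i} dR = e^{-r²/2} 2^i ∑ₖ (i+k)!/(k!)² (r²/2)^k`
`                     = 2^i ∑_{j ≤ i} C(i,j) i!/j! (r²/2)^j`,
the last step by Vandermonde's identity. This is a polynomial in `r²` of degree `i` with leading
coefficient `1`, so `c ↦ α` is given by a unitriangular matrix and is bijective; a polynomial in
`r²` is determined by its values on `r ≥ 0`.
-/

open Finset

lemma Real.hasSum_pow_div_factorial (y : ℝ) :
    HasSum (fun n : ℕ => y ^ n / n.factorial) (exp y) :=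
  exp_eq_exp_ℝ ▸ NormedSpace.expSeries_div_hasSum_exp y

lemma continuous_I0 : Continuous I0 :=
  continuous_const.mul
    (intervalIntegral.continuous_parametric_intervalIntegral_of_continuous' (by fun_prop) 0 π)

lemma I0_nonneg (x : ℝ) : 0 ≤ I0 x :=
  mul_nonneg (by positivity)
    (intervalIntegral.integral_nonneg pi_pos.le fun θ _ => (exp_pos _).le)

lemma abs_mul_cos_le (x θ : ℝ) : |x * cos θ| ≤ |x| := by
  rw [abs_mul]
  exact mul_le_of_le_one_right (abs_nonneg x) (abs_cos_le_one θ)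

lemma I0_le_exp_abs (x : ℝ) : I0 x ≤ exp |x| := by
  have h : ∫ θ in (0:ℝ)..π, exp (x * cos θ) ≤ ∫ _ in (0:ℝ)..π, exp |x| :=
    intervalIntegral.integral_mono_on pi_pos.le (by apply Continuous.intervalIntegrable; fun_prop)
      intervalIntegrable_const fun θ _ => exp_le_exp.2 ((le_abs_self _).trans (abs_mul_cos_le x θ))
  rw [intervalIntegral.integral_const, sub_zero, smul_eq_mul] at h
  calc I0 x ≤ 1 / π * (π * exp |x|) := mul_le_mul_of_nonneg_left h (by positivity)
    _ = exp |x| := by field_simp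

lemma integral_cos_pow_odd (n : ℕ) : ∫ θ in (0:ℝ)..π, cos θ ^ (2 * n + 1) = 0 := by
  have h := intervalIntegral.integral_comp_sub_left (fun θ => cos θ ^ (2 * n + 1))
    (a := 0) (b := π) π
  simp only [sub_zero, sub_self, cos_pi_sub, Odd.neg_pow (odd_two_mul_add_one n),
    intervalIntegral.integral_neg] at h
  linarith

lemma integral_cos_pow_even (n : ℕ) :
    ∫ θ in (0:ℝ)..π, cos θ ^ (2 * n) = π * (2 * n).factorial / (4 ^ n * n.factorial ^ 2) := by
  induction n with
  | zero => simp
  | succ k ih =>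
    rw [mul_add_one, integral_cos_pow, sin_pi, sin_zero, ih, Nat.factorial_succ,
      show 2 * k + 2 = (2 * k + 1) + 1 by ring, Nat.factorial_succ, Nat.factorial_succ]
    push_cast
    field_simp
    ring

lemma hasSum_integral_exp_mul_cos (x : ℝ) :
    HasSum (fun n : ℕ => x ^ n / n.factorial * ∫ θ in (0:ℝ)..π, cos θ ^ n)
      (∫ θ in (0:ℝ)..π, exp (x * cos θ)) := by
  have hbound (n : ℕ) (θ : ℝ) : ‖(x * cos θ) ^ n / n.factorial‖ ≤ |x| ^ n / n.factorial := by
    rw [norm_div, norm_pow, Real.norm_eq_abs, RCLike.norm_natCast]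
    exact div_le_div_of_nonneg_right (pow_le_pow_left₀ (abs_nonneg _) (abs_mul_cos_le x θ) n)
      (Nat.cast_nonneg _)
  have hsum : Summable fun n : ℕ => |x| ^ n / (n.factorial : ℝ) := summable_pow_div_factorial |x|
  have h := intervalIntegral.hasSum_integral_of_dominated_convergence
    (F := fun n θ => (x * cos θ) ^ n / n.factorial) (f := fun θ => exp (x * cos θ))
    (μ := volume) (a := 0) (b := π) (fun (n : ℕ) _ => |x| ^ n / (n.factorial : ℝ))
    (fun n => by apply Continuous.aestronglyMeasurable; fun_prop)
    (fun n => .of_forall fun θ _ => hbound n θ)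
    (.of_forall fun _ _ => hsum) intervalIntegrable_const
    (.of_forall fun θ _ => Real.hasSum_pow_div_factorial (x * cos θ))
  refine h.congr_fun fun n => ?_
  simp only [mul_pow, mul_div_right_comm _ (cos _ ^ n), intervalIntegral.integral_const_mul]

lemma hasSum_I0 (x : ℝ) :
    HasSum (fun k : ℕ => x ^ (2 * k) / (4 ^ k * k.factorial ^ 2)) (I0 x) := by
  set J : ℕ → ℝ := fun n => x ^ n / n.factorial * ∫ θ in (0:ℝ)..π, cos θ ^ n
  have hodd : ∀ n ∉ Set.range (fun k : ℕ => 2 * k), J n = 0 := by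
    intro n hn
    obtain ⟨k, rfl⟩ : Odd n := Nat.not_even_iff_odd.1 fun ⟨k, hk⟩ => hn ⟨k, by simp only; omega⟩
    simp [J, integral_cos_pow_odd]
  have heven := ((Function.Injective.hasSum_iff (fun a b h => by simpa using h) hodd).2
    (hasSum_integral_exp_mul_cos x)).mul_left (1 / π)
  rw [I0]
  refine heven.congr_fun fun k => ?_
  simp only [Function.comp_apply, J, integral_cos_pow_even]
  field_simp

lemma choose_add_eq_sum_choose_mul_choose (i k : ℕ) :
    (i + k).choose k = ∑ j ∈ range (i + 1), i.choose j * k.choose j := by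
  rw [← Nat.choose_symm_add, add_comm, Nat.add_choose_eq,
    Finset.Nat.sum_antidiagonal_eq_sum_range_succ_mk]
  refine sum_congr rfl fun j hj => ?_
  rw [mul_comm, Nat.choose_symm (mem_range_succ_iff.1 hj)]

lemma hasSum_choose_mul_pow_div_factorial (j : ℕ) (y : ℝ) :
    HasSum (fun k : ℕ => k.choose j * y ^ k / k.factorial) (y ^ j / j.factorial * exp y) := by
  have hvanish : ∀ k ∉ Set.range (· + j), (k.choose j * y ^ k / k.factorial : ℝ) = 0 := by
    intro k hk
    rw [Nat.choose_eq_zero_of_lt (by by_contra! h; exact hk ⟨k - j, by simp only; omega⟩)]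
    simp
  refine (Function.Injective.hasSum_iff (add_left_injective j) hvanish).1 ?_
  refine ((Real.hasSum_pow_div_factorial y).mul_left (y ^ j / j.factorial)).congr_fun fun m => ?_
  simp only [Function.comp_apply]
  have hchoose : ((m + j).choose j : ℝ) ≠ 0 := Nat.cast_ne_zero.2 (Nat.choose_pos (by omega)).ne'
  rw [← Nat.add_choose_mul_factorial_mul_factorial m j, pow_add]
  push_cast
  field_simp

lemma hasSum_factorial_add_div_sq_mul_pow (i : ℕ) (y : ℝ) :
    HasSum (fun k : ℕ => (i + k).factorial / (k.factorial : ℝ) ^ 2 * y ^ k)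
      (exp y * ∑ j ∈ range (i + 1), i.choose j * i.factorial / j.factorial * y ^ j) := by
  have h := hasSum_sum fun j (_ : j ∈ range (i + 1)) =>
    (hasSum_choose_mul_pow_div_factorial j y).mul_left (i.choose j * i.factorial : ℝ)
  have hval : exp y * ∑ j ∈ range (i + 1), i.choose j * i.factorial / j.factorial * y ^ j
      = ∑ j ∈ range (i + 1), i.choose j * i.factorial * (y ^ j / j.factorial * exp y) := by
    rw [mul_sum]
    exact sum_congr rfl fun j _ => by ring
  rw [hval]
  refine h.congr_fun fun k => ?_
  rw [← Nat.add_choose_mul_factorial_mul_factorial, choose_add_eq_sum_choose_mul_choose]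
  push_cast
  simp_rw [sum_mul, sum_div, sum_mul]
  refine sum_congr rfl fun j _ => ?_
  field_simp

lemma integrableOn_pow_mul_exp_neg_mul_sq {b : ℝ} (hb : 0 < b) (n : ℕ) :
    IntegrableOn (fun R : ℝ => R ^ n * exp (-b * R ^ 2)) (Ioi 0) := by
  simpa [rpow_natCast] using
    integrableOn_rpow_mul_exp_neg_mul_sq hb (s := n) (by linarith [n.cast_nonneg (α := ℝ)])

lemma integral_pow_mul_exp_neg_sq_div_two_s17 (m : ℕ) :
    ∫ R in Ioi (0:ℝ), R ^ (2 * m + 1) * exp (-R ^ 2 / 2) = 2 ^ m * m.factorial := by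
  have h := integral_rpow_mul_exp_neg_mul_rpow (p := 2) (q := 2 * m + 1) (b := 1 / 2)
    two_pos (by linarith [m.cast_nonneg (α := ℝ)]) one_half_pos
  have hpow : -(((2 * m + 1 : ℝ)) + 1) / 2 = -((m + 1 : ℕ) : ℝ) := by push_cast; ring
  have hgamma : ((2 * m + 1 : ℝ) + 1) / 2 = (m : ℕ) + 1 := by ring
  rw [hpow, hgamma, Gamma_nat_eq_factorial, rpow_neg (by norm_num), rpow_natCast] at h
  convert h using 1
  · refine setIntegral_congr_fun measurableSet_Ioi fun R _ => ?_
    norm_cast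
    ring_nf
  · rw [one_div, inv_pow, inv_inv, pow_succ]
    field_simp

lemma Ker_nonneg {R : ℝ} (hR : 0 ≤ R) (r : ℝ) : 0 ≤ Ker R r :=
  mul_nonneg (mul_nonneg hR (exp_pos _).le) (I0_nonneg _)

lemma Ker_le {R : ℝ} (hR : 0 ≤ R) (r : ℝ) :
    Ker R r ≤ exp (r ^ 2) * (R * exp (-(1 / 4) * R ^ 2)) := by
  have hI : I0 (r * R) ≤ exp (|r| * R) := by
    simpa [abs_mul, abs_of_nonneg hR] using I0_le_exp_abs (r * R)
  -- the left side is `-(R - |r|)²/2`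
  have hexp : -(R ^ 2 + r ^ 2) / 2 + |r| * R ≤ r ^ 2 + -(1 / 4) * R ^ 2 := by
    nlinarith [sq_nonneg (|r| - R / 2), sq_abs r]
  calc Ker R r ≤ R * exp (-(R ^ 2 + r ^ 2) / 2) * exp (|r| * R) := by
        unfold Ker; gcongr
    _ = R * exp (-(R ^ 2 + r ^ 2) / 2 + |r| * R) := by rw [exp_add]; ring
    _ ≤ R * exp (r ^ 2 + -(1 / 4) * R ^ 2) := by gcongr
    _ = exp (r ^ 2) * (R * exp (-(1 / 4) * R ^ 2)) := by rw [exp_add]; ring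

lemma integrableOn_Ker_mul_pow (r : ℝ) (k : ℕ) :
    IntegrableOn (fun R => Ker R r * R ^ k) (Ioi 0) := by
  have hcont : Continuous fun R => Ker R r * R ^ k := by
    have := continuous_I0
    unfold Ker
    fun_prop
  refine Integrable.mono' (((integrableOn_pow_mul_exp_neg_mul_sq (b := 1 / 4) (by norm_num)
    (k + 1))).const_mul (exp (r ^ 2))) hcont.aestronglyMeasurable ?_
  filter_upwards [ae_restrict_mem measurableSet_Ioi] with R (hR : 0 < R)
  rw [Real.norm_of_nonneg (mul_nonneg (Ker_nonneg hR.le r) (by positivity))]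
  calc Ker R r * R ^ k ≤ exp (r ^ 2) * (R * exp (-(1 / 4) * R ^ 2)) * R ^ k := by
        gcongr; exact Ker_le hR.le r
    _ = exp (r ^ 2) * (R ^ (k + 1) * exp (-(1 / 4) * R ^ 2)) := by ring

lemma hasSum_integral_Ker_mul_pow_two_mul (i : ℕ) (r : ℝ) :
    HasSum (fun k : ℕ => exp (-r ^ 2 / 2) * 2 ^ i *
        ((i + k).factorial / (k.factorial : ℝ) ^ 2 * (r ^ 2 / 2) ^ k))
      (∫ R in Ioi 0, Ker R r * R ^ (2 * i)) := by
  set f : ℕ → ℝ → ℝ := fun k R => r ^ (2 * k) * exp (-r ^ 2 / 2) / (4 ^ k * k.factorial ^ 2) *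
    (R ^ (2 * (i + k) + 1) * exp (-R ^ 2 / 2))
  have hpt : ∀ R, HasSum (fun k => f k R) (Ker R r * R ^ (2 * i)) := by
    intro R
    have h := (hasSum_I0 (r * R)).mul_left (R ^ (2 * i + 1) * exp (-(R ^ 2 + r ^ 2) / 2))
    rw [show R ^ (2 * i + 1) * exp (-(R ^ 2 + r ^ 2) / 2) * I0 (r * R) = Ker R r * R ^ (2 * i) by
      rw [Ker]; ring] at h
    refine h.congr_fun fun k => ?_
    simp only [f]
    rw [show -(R ^ 2 + r ^ 2) / 2 = -R ^ 2 / 2 + -r ^ 2 / 2 by ring, exp_add,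
      show 2 * (i + k) + 1 = (2 * i + 1) + 2 * k by ring, pow_add, mul_pow]
    ring
  have hintegrable : ∀ k, IntegrableOn (f k) (Ioi 0) := fun k =>
    ((integrableOn_pow_mul_exp_neg_mul_sq one_half_pos (2 * (i + k) + 1)).congr_fun
      (fun R _ => by ring_nf) measurableSet_Ioi).const_mul _
  have hintegral : ∀ k, ∫ R in Ioi 0, f k R = exp (-r ^ 2 / 2) * 2 ^ i *
      ((i + k).factorial / (k.factorial : ℝ) ^ 2 * (r ^ 2 / 2) ^ k) := by
    intro k
    rw [integral_const_mul, integral_pow_mul_exp_neg_sq_div_two_s17, pow_add, pow_mul, div_pow,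
      show (4 : ℝ) ^ k = 2 ^ k * 2 ^ k by rw [← mul_pow]; norm_num]
    field_simp
  have hnorm : ∀ k, ∫ R in Ioi 0, ‖f k R‖ = ∫ R in Ioi 0, f k R := fun k =>
    setIntegral_congr_fun measurableSet_Ioi fun R (hR : 0 < R) =>
      Real.norm_of_nonneg (mul_nonneg
        (div_nonneg (mul_nonneg ((even_two_mul k).pow_nonneg r) (exp_pos _).le) (by positivity))
        (mul_nonneg (pow_nonneg hR.le _) (exp_pos _).le))
  have hsum := ((hasSum_factorial_add_div_sq_mul_pow i (r ^ 2 / 2)).summable.mul_left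
    (exp (-r ^ 2 / 2) * 2 ^ i))
  have h := hasSum_integral_of_summable_integral_norm hintegrable
    (hsum.congr fun k => by rw [hnorm, hintegral])
  simp only [hintegral, (hpt _).tsum_eq] at h
  exact h

noncomputable def kerMomentCoeff (i j : ℕ) : ℝ :=
  2 ^ i * i.choose j * i.factorial / (2 ^ j * j.factorial)

lemma integral_Ker_mul_pow_two_mul (i : ℕ) (r : ℝ) :
    ∫ R in Ioi 0, Ker R r * R ^ (2 * i)
      = ∑ j ∈ range (i + 1), kerMomentCoeff i j * r ^ (2 * j) := by
  rw [(hasSum_integral_Ker_mul_pow_two_mul i r).unique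
    ((hasSum_factorial_add_div_sq_mul_pow i (r ^ 2 / 2)).mul_left (exp (-r ^ 2 / 2) * 2 ^ i)),
    mul_sum, mul_sum]
  have hexp : exp (-r ^ 2 / 2) * exp (r ^ 2 / 2) = 1 := by
    rw [← exp_add, neg_div, neg_add_cancel, exp_zero]
  refine sum_congr rfl fun j _ => ?_
  rw [kerMomentCoeff, div_pow, ← pow_mul]
  linear_combination
    (2 ^ i * (i.choose j * i.factorial / j.factorial * (r ^ (2 * j) / 2 ^ j))) * hexp

lemma kerMomentCoeff_self (i : ℕ) : kerMomentCoeff i i = 1 := by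
  simp [kerMomentCoeff, Nat.factorial_ne_zero]

lemma kerMomentCoeff_of_lt {i j : ℕ} (h : i < j) : kerMomentCoeff i j = 0 := by
  simp [kerMomentCoeff, Nat.choose_eq_zero_of_lt h]

lemma integral_Ker_mul_sum_pow_two_mul {m : ℕ} (c : Fin m → ℝ) (r : ℝ) :
    ∫ R in Ioi 0, Ker R r * ∑ i : Fin m, c i * R ^ (2 * (i : ℕ))
      = ∑ j : Fin m, (∑ i : Fin m, kerMomentCoeff i j * c i) * r ^ (2 * (j : ℕ)) := by
  have hmoment (i : Fin m) : ∫ R in Ioi 0, Ker R r * R ^ (2 * (i : ℕ))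
      = ∑ j : Fin m, kerMomentCoeff i j * r ^ (2 * (j : ℕ)) := by
    rw [integral_Ker_mul_pow_two_mul,
      Fin.sum_univ_eq_sum_range (fun j => kerMomentCoeff i j * r ^ (2 * j))]
    refine sum_subset (range_subset_range.2 i.2) fun j _ hji => ?_
    rw [kerMomentCoeff_of_lt (by simpa using hji), zero_mul]
  simp_rw [mul_sum, mul_left_comm _ (c _)]
  rw [integral_finsetSum _ fun i _ => (integrableOn_Ker_mul_pow r _).const_mul (c i)]
  simp_rw [integral_const_mul, hmoment, mul_sum, sum_mul]
  rw [sum_comm]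
  exact sum_congr rfl fun j _ => sum_congr rfl fun i _ => by ring

lemma eq_of_forall_sum_mul_pow_eq {ι K : Type*} [Fintype ι] [CommRing K] [IsDomain K]
    {s : Set K} (hs : s.Infinite) {e : ι → ℕ} (he : Function.Injective e) {β γ : ι → K}
    (h : ∀ x ∈ s, ∑ i, β i * x ^ e i = ∑ i, γ i * x ^ e i) : β = γ := by
  set q : Polynomial K := ∑ i, Polynomial.monomial (e i) (β i - γ i)
  have hq : q = 0 := by
    refine Polynomial.eq_zero_of_infinite_isRoot q (hs.mono fun x hx => ?_)
    simp [q, Polynomial.eval_finsetSum, sum_sub_distrib, h x hx]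
  funext i
  have hcoeff : q.coeff (e i) = β i - γ i := by
    simp only [q, Polynomial.finsetSum_coeff, Polynomial.coeff_monomial]
    exact (Fintype.sum_eq_single i fun j hj => if_neg (he.ne hj)).trans (if_pos rfl)
  rwa [hq, Polynomial.coeff_zero, eq_comm, sub_eq_zero] at hcoeff

lemma Matrix.mulVec_bijective_of_isUpperTriangular {n K : Type*} [Fintype n] [DecidableEq n]
    [LinearOrder n] [Field K] {M : Matrix n n K} (hM : M.IsUpperTriangular)
    (hdiag : ∀ i, M i i ≠ 0) : Function.Bijective M.mulVec := by
  have hunit : IsUnit M := by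
    rw [Matrix.isUnit_iff_isUnit_det, Matrix.det_of_isUpperTriangular hM, isUnit_iff_ne_zero]
    exact prod_ne_zero_iff.2 fun i _ => hdiag i
  exact ⟨Matrix.mulVec_injective_iff_isUnit.2 hunit, Matrix.mulVec_surjective_iff_isUnit.2 hunit⟩

theorem stmt_17 (n : ℕ) (α : Fin (n + 1) → ℝ) :
    ∃! c : Fin (n + 1) → ℝ, ∀ r : ℝ, 0 ≤ r →
      (∫ R in Ioi (0:ℝ), Ker R r * ∑ i : Fin (n + 1), c i * R ^ (2 * (i : ℕ)))
        = ∑ i : Fin (n + 1), α i * r ^ (2 * (i : ℕ)) := by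
  let A : Matrix (Fin (n + 1)) (Fin (n + 1)) ℝ := Matrix.of fun j i => kerMomentCoeff i j
  have hA : A.IsUpperTriangular := fun j i (hij : i < j) => kerMomentCoeff_of_lt hij
  have hbij := Matrix.mulVec_bijective_of_isUpperTriangular hA fun i => by
    simp [A, kerMomentCoeff_self]
  refine (existsUnique_congr fun c => ?_).2 (hbij.existsUnique α)
  have hpow_inj : Function.Injective fun i : Fin (n + 1) => 2 * (i : ℕ) :=
    fun i j h => Fin.ext (by simpa using h)
  simp_rw [integral_Ker_mul_sum_pow_two_mul]
  exact ⟨fun h => eq_of_forall_sum_mul_pow_eq (Ici_infinite 0) hpow_inj h, fun h r _ => by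
    rw [← h]; rfl⟩
end
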